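/- The function φ(δ_x, δ_z) = h((1 - √(δ_x² + δ_z²))/2) + 1 - h((1 - δ_z)/2), defined for δ_x, δ_z ≥ 0 with δ_x² + δ_z² ≤ 1, is non-increasing in δ_x for fixed δ_z, and satisfies φ(δ_x, δ_z) ≤ φ(δ_x, 0) = h((1 - δ_x)/2). -/

import Mathlib

/-!
With `g t = binEntropy ((1 - √t) / 2)` (entropy in nats),
`φ(δx, δz) = (g (δx² + δz²) - g (δz²)) / log 2 + 1`, so `φ(δx, δz) ≤ φ(δx, 0)` is the inequality
`g (a + b) + g 0 ≤ g a + g b`, which holds because `g` is concave on `[0, 1]`: its derivative is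
`-(artanh √t / √t) / 2`, and `artanh s / s` is increasing because `artanh` is convex on `[0, 1)` and
vanishes at `0`. Monotonicity in `δx` is monotonicity of `h` on `[0, 1/2]`.
-/

/-- Binary entropy with base-2 logarithm. -/
noncomputable def binEnt (y : ℝ) : ℝ :=
  -y * Real.logb 2 y - (1 - y) * Real.logb 2 (1 - y)

/-- `φ(δx, δz) = h((1 - √(δx² + δz²))/2) + 1 - h((1 - δz)/2)`. -/
noncomputable def phiEnt (δx δz : ℝ) : ℝ :=
  binEnt ((1 - Real.sqrt (δx ^ 2 + δz ^ 2)) / 2) + 1 - binEnt ((1 - δz) / 2)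

open Real Set

theorem ConcaveOn.map_add_add_map_zero_le {𝕜 : Type*} [Field 𝕜] [LinearOrder 𝕜]
    [IsStrictOrderedRing 𝕜] {s : Set 𝕜} {f : 𝕜 → 𝕜} (hf : ConcaveOn 𝕜 s f) {a b : 𝕜}
    (ha : 0 ≤ a) (hb : 0 ≤ b) (h0 : 0 ∈ s) (hab : a + b ∈ s) :
    f (a + b) + f 0 ≤ f a + f b := by
  rcases (add_nonneg ha hb).eq_or_lt with hc | hc
  · obtain ⟨rfl, rfl⟩ : a = 0 ∧ b = 0 := ⟨by linarith, by linarith⟩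
    simp
  have hw : a / (a + b) + b / (a + b) = 1 := by field_simp
  have hw' : b / (a + b) + a / (a + b) = 1 := by rw [add_comm, hw]
  have h₁ := hf.2 hab h0 (div_nonneg ha hc.le) (div_nonneg hb hc.le) hw
  have h₂ := hf.2 hab h0 (div_nonneg hb hc.le) (div_nonneg ha hc.le) hw'
  simp only [smul_eq_mul, mul_zero, add_zero, div_mul_cancel₀ _ hc.ne'] at h₁ h₂
  have hsum : a / (a + b) * f (a + b) + b / (a + b) * f 0
      + (b / (a + b) * f (a + b) + a / (a + b) * f 0) = f (a + b) + f 0 := by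
    field_simp
    ring
  linarith

namespace Real

theorem hasDerivAt_artanh {x : ℝ} (hx : x ∈ Ioo (-1) 1) :
    HasDerivAt artanh (1 / (1 - x ^ 2)) x := by
  obtain ⟨hx₁, hx₂⟩ := hx
  have hp : 1 + x ≠ 0 := by linarith
  have hm : 1 - x ≠ 0 := by linarith
  have hlog : HasDerivAt (fun y => (log (1 + y) - log (1 - y)) / 2) (1 / (1 - x ^ 2)) x := by
    have h₁ := ((hasDerivAt_id x).const_add 1).log hp
    have h₂ := ((hasDerivAt_id x).const_sub 1).log hm
    refine ((h₁.sub h₂).div_const 2).congr_deriv ?_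
    rw [id, show 1 - x ^ 2 = (1 + x) * (1 - x) by ring]
    field_simp
    ring
  refine hlog.congr_of_eventuallyEq ?_
  filter_upwards [Ioo_mem_nhds hx₁ hx₂] with y hy
  rw [artanh_eq_half_log (Ioo_subset_Icc_self hy), log_div (by linarith [hy.1]) (by linarith [hy.2])]
  ring

theorem convexOn_artanh : ConvexOn ℝ (Ico 0 1) artanh := by
  have hderiv : ∀ x ∈ Ioo (0 : ℝ) 1, HasDerivAt artanh (1 / (1 - x ^ 2)) x := fun x hx =>
    hasDerivAt_artanh ⟨by linarith [hx.1], hx.2⟩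
  refine MonotoneOn.convexOn_of_deriv (convex_Ico 0 1) ?_ ?_ ?_
  · intro x hx
    exact (hasDerivAt_artanh ⟨by linarith [hx.1], hx.2⟩).continuousAt.continuousWithinAt
  · rw [interior_Ico]
    exact fun x hx => (hderiv x hx).differentiableAt.differentiableWithinAt
  · rw [interior_Ico]
    intro x hx y hy hxy
    rw [(hderiv x hx).deriv, (hderiv y hy).deriv]
    have : 0 < 1 - y ^ 2 := by nlinarith [hy.1, hy.2]
    gcongr
    exact hx.1.le

theorem monotoneOn_artanh_div : MonotoneOn (fun x => artanh x / x) (Ioo 0 1) := by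
  intro x hx y hy hxy
  have := convexOn_artanh.secant_mono (a := 0) ⟨le_rfl, one_pos⟩ (Ioo_subset_Ico_self hx)
    (Ioo_subset_Ico_self hy) hx.1.ne' hy.1.ne' hxy
  simpa [artanh_zero] using this

noncomputable def binEntropySqrt (t : ℝ) : ℝ := binEntropy ((1 - √t) / 2)

theorem hasDerivAt_binEntropySqrt {t : ℝ} (ht₀ : 0 < t) (ht₁ : t < 1) :
    HasDerivAt binEntropySqrt (-(artanh √t / √t) / 2) t := by
  set s := √t
  have hs₀ : 0 < s := sqrt_pos.mpr ht₀
  have hs₁ : s < 1 := sqrt_one ▸ sqrt_lt_sqrt ht₀.le ht₁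
  have hentropy := hasDerivAt_binEntropy (p := (1 - s) / 2) (by linarith) (by linarith)
  have hp : HasDerivAt (fun t => (1 - √t) / 2) (-(1 / (2 * s)) / 2) t :=
    ((hasDerivAt_sqrt ht₀.ne').const_sub 1).div_const 2
  refine (hentropy.comp t hp).congr_deriv ?_
  rw [artanh_eq_half_log ⟨by linarith, hs₁.le⟩, show 1 - (1 - s) / 2 = (1 + s) / 2 by ring,
    ← log_div (by linarith) (by linarith), div_div_div_cancel_right₀ two_ne_zero]
  field_simp

theorem concaveOn_binEntropySqrt : ConcaveOn ℝ (Icc 0 1) binEntropySqrt := by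
  have hderiv : ∀ t ∈ Ioo (0 : ℝ) 1,
      HasDerivAt binEntropySqrt (-(artanh √t / √t) / 2) t := fun t ht =>
    hasDerivAt_binEntropySqrt ht.1 ht.2
  refine AntitoneOn.concaveOn_of_deriv (convex_Icc 0 1) ?_ ?_ ?_
  · exact (binEntropy_continuous.comp (by fun_prop)).continuousOn
  · rw [interior_Icc]
    exact fun t ht => (hderiv t ht).differentiableAt.differentiableWithinAt
  · rw [interior_Icc]
    intro t ht u hu htu
    rw [(hderiv t ht).deriv, (hderiv u hu).deriv]
    have hmem : ∀ t ∈ Ioo (0 : ℝ) 1, √t ∈ Ioo (0 : ℝ) 1 := fun t ht =>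
      ⟨sqrt_pos.mpr ht.1, sqrt_one ▸ sqrt_lt_sqrt ht.1.le ht.2⟩
    have := monotoneOn_artanh_div (hmem t ht) (hmem u hu) (sqrt_le_sqrt htu)
    linarith

end Real

theorem binEnt_eq_binEntropy_div_log_two (y : ℝ) : binEnt y = binEntropy y / log 2 := by
  simp only [binEnt, binEntropy, logb, log_inv]
  ring

theorem binEnt_monotoneOn : MonotoneOn binEnt (Icc 0 2⁻¹) := by
  intro x hx y hy hxy
  simp only [binEnt_eq_binEntropy_div_log_two]
  gcongr
  exact binEntropy_strictMonoOn.monotoneOn hx hy hxy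

theorem phiEnt_eq_binEntropySqrt (δx : ℝ) {δz : ℝ} (hδz : 0 ≤ δz) :
    phiEnt δx δz = (binEntropySqrt (δx ^ 2 + δz ^ 2) - binEntropySqrt (δz ^ 2)) / log 2 + 1 := by
  rw [phiEnt, binEntropySqrt, binEntropySqrt, sqrt_sq hδz, binEnt_eq_binEntropy_div_log_two,
    binEnt_eq_binEntropy_div_log_two]
  ring

theorem stmt16 (δx δz : ℝ) (hδx : 0 ≤ δx) (hδz : 0 ≤ δz) (hδ : δx ^ 2 + δz ^ 2 ≤ 1) :
    (∀ δx' : ℝ, δx ≤ δx' → δx' ^ 2 + δz ^ 2 ≤ 1 → phiEnt δx' δz ≤ phiEnt δx δz) ∧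
    phiEnt δx δz ≤ phiEnt δx 0 ∧
    phiEnt δx 0 = binEnt ((1 - δx) / 2) := by
  have hmem : ∀ c, 0 ≤ c → c ≤ 1 → (1 - √c) / 2 ∈ Icc (0 : ℝ) 2⁻¹ := fun c hc₀ hc₁ =>
    ⟨by linarith [sqrt_le_one.mpr hc₁], by linarith [sqrt_nonneg c]⟩
  refine ⟨fun δx' hle hδ' => ?_, ?_, ?_⟩
  · have hsqrt : √(δx ^ 2 + δz ^ 2) ≤ √(δx' ^ 2 + δz ^ 2) := sqrt_le_sqrt (by nlinarith)
    have := binEnt_monotoneOn (hmem _ (by positivity) hδ') (hmem _ (by positivity) hδ)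
      (by linarith)
    simp only [phiEnt]
    linarith
  · rw [phiEnt_eq_binEntropySqrt δx hδz, phiEnt_eq_binEntropySqrt δx le_rfl]
    have := concaveOn_binEntropySqrt.map_add_add_map_zero_le (sq_nonneg δx) (sq_nonneg δz)
      ⟨le_rfl, zero_le_one⟩ ⟨by positivity, hδ⟩
    have hlog : 0 < log 2 := log_pos one_lt_two
    rw [zero_pow two_ne_zero, add_zero]
    gcongr ?_ / _ + 1
    linarith
  · rw [phiEnt, zero_pow two_ne_zero, add_zero, sqrt_sq hδx, sub_zero,
      binEnt_eq_binEntropy_div_log_two (1 / 2), one_div, binEntropy_two_inv,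
      div_self (log_pos one_lt_two).ne']
    ring
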